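/- arXiv:2501.02936 — 3 statements merged into one kernel-verified Lean document; each statement's English description precedes it below -/
import Mathlib

section
/- Let z : (−∞,0] → ℂⁿ be differentiable with z'(ξ) = W z(ξ) + p(z(ξ)) for all ξ ≤ 0 and z(ξ) → 0 as ξ → −∞. Then for every β with 0 < β < min_{1≤i≤n} |Re w_i| there exists a constant κ > 0 such that ‖z(ξ)‖ ≤ κ e^{βξ} for all ξ ≤ 0. -/
open scoped Matrix

open Finset Complex Filter

lemma normSq_deriv {f : ℝ → ℂ} {f' : ℂ} {x : ℝ} (h : HasDerivAt f f' x) :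
    HasDerivAt (fun t => Complex.normSq (f t))
      (2 * ((f x).re * f'.re + (f x).im * f'.im)) x := by
  have hre : HasDerivAt (fun t => (f t).re) f'.re x :=
    Complex.reCLM.hasFDerivAt.comp_hasDerivAt x h
  have him : HasDerivAt (fun t => (f t).im) f'.im x :=
    Complex.imCLM.hasFDerivAt.comp_hasDerivAt x h
  have h2 := (hre.mul hre).add (him.mul him)
  have : (fun t => Complex.normSq (f t)) = fun t => (f t).re * (f t).re + (f t).im * (f t).im := by
    funext t; exact Complex.normSq_apply _
  rw [this]
  exact h2.congr_deriv (by ring)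

lemma norm_sq_le_sum_normSq (n : ℕ) (f : Fin n → ℂ) :
    ‖f‖ ^ 2 ≤ ∑ i, Complex.normSq (f i) := by
  have hN : (0:ℝ) ≤ ∑ i, Complex.normSq (f i) :=
    Finset.sum_nonneg fun i _ => Complex.normSq_nonneg _
  have h1 : ‖f‖ ≤ Real.sqrt (∑ i, Complex.normSq (f i)) := by
    apply pi_norm_le_iff_of_nonneg (Real.sqrt_nonneg _) |>.2
    intro i
    rw [show ‖f i‖ = Real.sqrt (Complex.normSq (f i)) by
      rw [Complex.norm_def]]
    exact Real.sqrt_le_sqrt (Finset.single_le_sum (fun j _ => Complex.normSq_nonneg _)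
      (Finset.mem_univ i))
  calc ‖f‖ ^ 2 ≤ Real.sqrt (∑ i, Complex.normSq (f i)) ^ 2 :=
        pow_le_pow_left₀ (norm_nonneg _) h1 2
    _ = _ := Real.sq_sqrt hN

/-- Exponential decay estimate for the leading boundary-layer term at `t = T`:
a solution of `z' = W z + p(z)` on `(-∞, 0]` (with `W = diag(w₁, …, wₙ)` hyperbolic and
`p` having arbitrarily small Lipschitz constant near `0`) which tends to `0` at `-∞`
satisfies `‖z(ξ)‖ ≤ κ e^{βξ}` for any `0 < β < min |Re wᵢ|`. -/
theorem stmt1 (n : ℕ) (w : Fin n → ℂ) (hw : ∀ i, (w i).re ≠ 0)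
    (P : (Fin n → ℂ) → (Fin n → ℂ)) (hPc : Continuous P) (hP0 : P 0 = 0)
    (hP : ∀ ε > 0, ∃ μ > 0, ∀ u v : Fin n → ℂ,
      ‖u‖ ≤ μ → ‖v‖ ≤ μ → ‖P u - P v‖ ≤ ε * ‖u - v‖)
    (z : ℝ → Fin n → ℂ)
    (hz : ∀ ξ : ℝ, ξ ≤ 0 → HasDerivAt z (Matrix.diagonal w *ᵥ z ξ + P (z ξ)) ξ)
    (hzlim : Filter.Tendsto z Filter.atBot (nhds 0))
    (β : ℝ) (hβ : 0 < β) (hβw : ∀ i, β < |(w i).re|) :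
    ∃ κ > 0, ∀ ξ : ℝ, ξ ≤ 0 → ‖z ξ‖ ≤ κ * Real.exp (β * ξ) := by
  rcases Nat.eq_zero_or_pos n with rfl | hn
  · refine ⟨1, one_pos, fun ξ _ => ?_⟩
    have hz0 : z ξ = 0 := Subsingleton.elim _ _
    rw [hz0, norm_zero, one_mul]
    positivity
  have : NeZero n := ⟨hn.ne'⟩
  -- spectral gap
  set α : ℝ := Finset.univ.inf' Finset.univ_nonempty (fun i => |(w i).re|) with hαdef
  have hβα : β < α := (Finset.lt_inf'_iff _).2 (fun i _ => hβw i)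
  have hα0 : 0 < α := hβ.trans hβα
  have hαle : ∀ i, α ≤ |(w i).re| := fun i => Finset.inf'_le _ (Finset.mem_univ i)
  -- Lipschitz constant
  set ε : ℝ := (α - β) / (2 * n) with hεdef
  have hn' : (0:ℝ) < n := by exact_mod_cast hn
  have hε : 0 < ε := div_pos (by linarith) (by positivity)
  have hcoef : 2 * (n:ℝ) * ε = α - β := by
    rw [hεdef]; field_simp
  obtain ⟨μ, hμ, hμle⟩ := hP ε hε
  have hPz : ∀ v : Fin n → ℂ, ‖v‖ ≤ μ → ‖P v‖ ≤ ε * ‖v‖ := by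
    intro v hv
    have := hμle v 0 hv (by simpa using hμ.le)
    simpa [hP0] using this
  -- point below which ‖z‖ ≤ μ
  obtain ⟨a, ha⟩ : ∃ a : ℝ, ∀ s ≤ a, ‖z s‖ ≤ μ := by
    have : ∀ᶠ s in atBot, ‖z s‖ ≤ μ := by
      have h0 : Tendsto (fun s => ‖z s‖) atBot (nhds 0) := by
        simpa using hzlim.norm
      exact h0.eventually_le_const hμ
    exact eventually_atBot.1 this
  set ξ₁ : ℝ := min a 0 with hξ₁def
  have hξ₁0 : ξ₁ ≤ 0 := min_le_right _ _
  have hμξ : ∀ s, s ≤ ξ₁ → ‖z s‖ ≤ μ := fun s hs => ha s (hs.trans (min_le_left _ _))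
  -- derivative machinery
  set F : ℝ → Fin n → ℂ := fun s => Matrix.diagonal w *ᵥ z s + P (z s) with hF
  have hFi : ∀ s i, F s i = w i * z s i + P (z s) i := by
    intro s i; simp [hF, Matrix.mulVec_diagonal]
  have hzi : ∀ ξ : ℝ, ξ ≤ 0 → ∀ i, HasDerivAt (fun t => z t i) (F ξ i) ξ :=
    fun ξ hξ => hasDerivAt_pi.mp (hz ξ hξ)
  set D : Fin n → ℝ → ℝ :=
    fun i s => 2 * ((z s i).re * (F s i).re + (z s i).im * (F s i).im) with hD
  have hDid : ∀ i s, D i s = 2 * (w i).re * Complex.normSq (z s i)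
      + 2 * ((starRingEnd ℂ) (z s i) * P (z s) i).re := by
    intro i s
    rw [hD]
    simp only [hFi, Complex.normSq_apply, Complex.add_re, Complex.add_im, Complex.mul_re,
      Complex.mul_im, Complex.conj_re, Complex.conj_im]
    ring
  -- index sets and Lyapunov functions
  set A : Finset (Fin n) := Finset.univ.filter (fun i => 0 < (w i).re) with hA
  set B : Finset (Fin n) := Finset.univ.filter (fun i => ¬ 0 < (w i).re) with hB
  set S : ℝ → ℝ := fun s => ∑ i ∈ A, Complex.normSq (z s i) with hSdef
  set U : ℝ → ℝ := fun s => ∑ i ∈ B, Complex.normSq (z s i) with hUdef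
  set N : ℝ → ℝ := fun s => ∑ i, Complex.normSq (z s i) with hNdef
  have hSU : ∀ s, S s + U s = N s := fun s => Finset.sum_filter_add_sum_filter_not _ _ _
  have hS0 : ∀ s, 0 ≤ S s := fun s => Finset.sum_nonneg fun i _ => Complex.normSq_nonneg _
  have hU0 : ∀ s, 0 ≤ U s := fun s => Finset.sum_nonneg fun i _ => Complex.normSq_nonneg _
  have hN0 : ∀ s, 0 ≤ N s := fun s => Finset.sum_nonneg fun i _ => Complex.normSq_nonneg _
  have hNz : ∀ s, ‖z s‖ ^ 2 ≤ N s := fun s => norm_sq_le_sum_normSq n (z s)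
  have hQA : ∀ ξ : ℝ, ξ ≤ 0 → HasDerivAt S (∑ i ∈ A, D i ξ) ξ :=
    fun ξ hξ => HasDerivAt.fun_sum fun i _ => normSq_deriv (hzi ξ hξ i)
  have hQB : ∀ ξ : ℝ, ξ ≤ 0 → HasDerivAt U (∑ i ∈ B, D i ξ) ξ :=
    fun ξ hξ => HasDerivAt.fun_sum fun i _ => normSq_deriv (hzi ξ hξ i)
  -- cross-term bound
  have hcross : ∀ s, s ≤ ξ₁ → ∀ i, |((starRingEnd ℂ) (z s i) * P (z s) i).re| ≤ ε * N s := by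
    intro s hs i
    have h1 : |((starRingEnd ℂ) (z s i) * P (z s) i).re|
        ≤ ‖z s i‖ * ‖P (z s) i‖ := by
      calc |((starRingEnd ℂ) (z s i) * P (z s) i).re|
          ≤ ‖(starRingEnd ℂ) (z s i) * P (z s) i‖ := Complex.abs_re_le_norm _
        _ = ‖z s i‖ * ‖P (z s) i‖ := by
            rw [norm_mul, Complex.norm_conj]
    have h2 : ‖z s i‖ ≤ ‖z s‖ := norm_le_pi_norm _ i
    have h3 : ‖P (z s) i‖ ≤ ε * ‖z s‖ :=
      (norm_le_pi_norm _ i).trans (hPz (z s) (hμξ s hs))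
    calc |((starRingEnd ℂ) (z s i) * P (z s) i).re| ≤ ‖z s i‖ * ‖P (z s) i‖ := h1
      _ ≤ ‖z s‖ * (ε * ‖z s‖) :=
          mul_le_mul h2 h3 (norm_nonneg _) (norm_nonneg _)
      _ = ε * ‖z s‖ ^ 2 := by ring
      _ ≤ ε * N s := mul_le_mul_of_nonneg_left (hNz s) hε.le
  -- summed derivative bounds
  have hcardA : ((A.card : ℝ)) ≤ n := by
    exact_mod_cast (Finset.card_filter_le _ _).trans (le_of_eq (Finset.card_fin n))
  have hcardB : ((B.card : ℝ)) ≤ n := by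
    exact_mod_cast (Finset.card_filter_le _ _).trans (le_of_eq (Finset.card_fin n))
  have hDS : ∀ s, s ≤ ξ₁ → 2 * α * S s - 2 * (n:ℝ) * ε * N s ≤ ∑ i ∈ A, D i s := by
    intro s hs
    have h1 : ∀ i ∈ A, 2 * α * Complex.normSq (z s i) - 2 * (ε * N s) ≤ D i s := by
      intro i hi
      have hpos : 0 < (w i).re := (Finset.mem_filter.1 hi).2
      have hre : α ≤ (w i).re := by have := hαle i; rwa [abs_of_pos hpos] at this
      have hc := hcross s hs i
      rw [hDid]
      have hmm : 0 ≤ ((w i).re - α) * Complex.normSq (z s i) :=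
        mul_nonneg (by linarith) (Complex.normSq_nonneg _)
      have hneg := neg_abs_le (((starRingEnd ℂ) (z s i)) * P (z s) i).re
      linarith
    calc 2 * α * S s - 2 * (n:ℝ) * ε * N s
        ≤ 2 * α * S s - (A.card : ℝ) * (2 * (ε * N s)) := by
          have : (A.card : ℝ) * (2 * (ε * N s)) ≤ (n:ℝ) * (2 * (ε * N s)) :=
            mul_le_mul_of_nonneg_right hcardA
              (mul_nonneg (by norm_num) (mul_nonneg hε.le (hN0 s)))
          linarith [mul_nonneg hε.le (hN0 s)]
      _ = ∑ i ∈ A, (2 * α * Complex.normSq (z s i) - 2 * (ε * N s)) := by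
          rw [Finset.sum_sub_distrib, ← Finset.mul_sum, Finset.sum_const, nsmul_eq_mul]
      _ ≤ ∑ i ∈ A, D i s := Finset.sum_le_sum h1
  have hDU : ∀ s, s ≤ ξ₁ → ∑ i ∈ B, D i s ≤ -(2 * α) * U s + 2 * (n:ℝ) * ε * N s := by
    intro s hs
    have h1 : ∀ i ∈ B, D i s ≤ -(2 * α) * Complex.normSq (z s i) + 2 * (ε * N s) := by
      intro i hi
      have hneg : (w i).re < 0 :=
        lt_of_le_of_ne (not_lt.1 (Finset.mem_filter.1 hi).2) (hw i)
      have hre : (w i).re ≤ -α := by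
        have := hαle i; rw [abs_of_neg hneg] at this; linarith
      have hc := hcross s hs i
      rw [hDid]
      have hmm : 0 ≤ (-α - (w i).re) * Complex.normSq (z s i) :=
        mul_nonneg (by linarith) (Complex.normSq_nonneg _)
      have hle := le_abs_self (((starRingEnd ℂ) (z s i)) * P (z s) i).re
      linarith
    calc ∑ i ∈ B, D i s
        ≤ ∑ i ∈ B, (-(2 * α) * Complex.normSq (z s i) + 2 * (ε * N s)) :=
          Finset.sum_le_sum h1
      _ = -(2 * α) * U s + (B.card : ℝ) * (2 * (ε * N s)) := by
          rw [Finset.sum_add_distrib, ← Finset.mul_sum, Finset.sum_const, nsmul_eq_mul]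
      _ ≤ -(2 * α) * U s + 2 * (n:ℝ) * ε * N s := by
          have : (B.card : ℝ) * (2 * (ε * N s)) ≤ (n:ℝ) * (2 * (ε * N s)) :=
            mul_le_mul_of_nonneg_right hcardB (mul_nonneg (by norm_num) (mul_nonneg hε.le (hN0 s)))
          linarith [mul_nonneg hε.le (hN0 s)]
  -- step 1 : U ≤ S on (-∞, ξ₁]
  have hGant : AntitoneOn (fun s => U s - S s) (Set.Iic ξ₁) := by
    apply antitoneOn_of_deriv_nonpos (convex_Iic ξ₁)
    · intro x hx
      exact (((hQB x ((Set.mem_Iic.1 hx).trans hξ₁0)).sub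
        (hQA x ((Set.mem_Iic.1 hx).trans hξ₁0))).continuousAt).continuousWithinAt
    · intro x hx
      rw [interior_Iic] at hx
      have hx0 : x ≤ 0 := (le_of_lt hx).trans hξ₁0
      exact (((hQB x hx0).sub (hQA x hx0)).differentiableAt).differentiableWithinAt
    · intro x hx
      rw [interior_Iic] at hx
      have hx1 : x ≤ ξ₁ := le_of_lt hx
      have hx0 : x ≤ 0 := hx1.trans hξ₁0
      rw [((hQB x hx0).fun_sub (hQA x hx0)).deriv]
      have h1 := hDU x hx1
      have h2 := hDS x hx1
      have hprod : 2 * (n:ℝ) * ε * N x = (α - β) * N x := by rw [hcoef]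
      have hβN : 0 ≤ β * N x := mul_nonneg hβ.le (hN0 x)
      have hSUx := hSU x
      have hαSU : α * S x + α * U x = α * N x := by rw [← hSUx]; ring
      linarith
  have hGlim : Tendsto (fun s => U s - S s) atBot (nhds 0) := by
    have hc : Continuous (fun v : Fin n → ℂ =>
        (∑ i ∈ B, Complex.normSq (v i)) - ∑ i ∈ A, Complex.normSq (v i)) := by
      apply Continuous.sub <;>
        exact continuous_finset_sum _ fun i _ =>
          Complex.continuous_normSq.comp (continuous_apply i)
    have := (hc.tendsto 0).comp hzlim
    simpa [Function.comp_def] using this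
  have hUS : ∀ s, s ≤ ξ₁ → U s - S s ≤ 0 := by
    intro s hs
    apply ge_of_tendsto hGlim
    rw [eventually_atBot]
    exact ⟨s, fun x hx => hGant (Set.mem_Iic.2 (hx.trans hs)) (Set.mem_Iic.2 hs) hx⟩
  -- step 2 : S e^{-2βs} monotone on (-∞, ξ₁]
  have hexp : ∀ ξ : ℝ, HasDerivAt (fun s => Real.exp (-(2*β) * s))
      (Real.exp (-(2*β) * ξ) * (-(2*β))) ξ := by
    intro ξ
    have := ((hasDerivAt_id ξ).const_mul (-(2*β))).exp
    simpa using this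
  have hHd : ∀ ξ : ℝ, ξ ≤ 0 → HasDerivAt (fun s => S s * Real.exp (-(2*β) * s))
      ((∑ i ∈ A, D i ξ) * Real.exp (-(2*β) * ξ)
        + S ξ * (Real.exp (-(2*β) * ξ) * (-(2*β)))) ξ :=
    fun ξ hξ => (hQA ξ hξ).mul (hexp ξ)
  have hHmono : MonotoneOn (fun s => S s * Real.exp (-(2*β) * s)) (Set.Iic ξ₁) := by
    apply monotoneOn_of_deriv_nonneg (convex_Iic ξ₁)
    · intro x hx
      exact ((hHd x ((Set.mem_Iic.1 hx).trans hξ₁0)).continuousAt).continuousWithinAt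
    · intro x hx
      rw [interior_Iic] at hx
      exact ((hHd x ((le_of_lt hx).trans hξ₁0)).differentiableAt).differentiableWithinAt
    · intro x hx
      rw [interior_Iic] at hx
      have hx1 : x ≤ ξ₁ := le_of_lt hx
      have hx0 : x ≤ 0 := hx1.trans hξ₁0
      rw [(hHd x hx0).deriv]
      have h2 := hDS x hx1
      have hprod : 2 * (n:ℝ) * ε * N x = (α - β) * N x := by rw [hcoef]
      have hUSx := hUS x hx1
      have hSUx := hSU x
      have hp : 0 ≤ (α - β) * (2 * S x - N x) :=
        mul_nonneg (by linarith) (by linarith)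
      have key : 0 ≤ (∑ i ∈ A, D i x) - 2 * β * S x := by linarith
      have hrw : (∑ i ∈ A, D i x) * Real.exp (-(2*β) * x)
          + S x * (Real.exp (-(2*β) * x) * (-(2*β)))
          = Real.exp (-(2*β) * x) * ((∑ i ∈ A, D i x) - 2 * β * S x) := by ring
      rw [hrw]
      exact mul_nonneg (Real.exp_pos _).le key
  -- tail estimate
  set C₁ : ℝ := Real.sqrt (2 * S ξ₁) * Real.exp (-β * ξ₁) with hC₁def
  have hC₁0 : 0 ≤ C₁ := mul_nonneg (Real.sqrt_nonneg _) (Real.exp_pos _).le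
  have htail : ∀ ξ, ξ ≤ ξ₁ → ‖z ξ‖ ≤ C₁ * Real.exp (β * ξ) := by
    intro ξ hξ
    have hm : S ξ * Real.exp (-(2*β) * ξ) ≤ S ξ₁ * Real.exp (-(2*β) * ξ₁) :=
      hHmono (Set.mem_Iic.2 hξ) (Set.mem_Iic.2 (le_refl ξ₁)) hξ
    have he2 : (0:ℝ) < Real.exp ((2*β) * ξ) := Real.exp_pos _
    have hmul : Real.exp (-(2*β) * ξ) * Real.exp ((2*β) * ξ) = 1 := by
      rw [← Real.exp_add]
      norm_num
    have hSξ : S ξ ≤ S ξ₁ * Real.exp (-(2*β) * ξ₁) * Real.exp ((2*β) * ξ) := by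
      have h3 := mul_le_mul_of_nonneg_right hm he2.le
      have h4 : S ξ * Real.exp (-(2*β) * ξ) * Real.exp ((2*β) * ξ) = S ξ := by
        rw [mul_assoc, hmul, mul_one]
      linarith
    have h1 : ‖z ξ‖ ^ 2 ≤ 2 * S ξ := by
      have := hNz ξ; have := hUS ξ hξ; have := hSU ξ; linarith
    have hR0 : 0 ≤ C₁ * Real.exp (β * ξ) := mul_nonneg hC₁0 (Real.exp_pos _).le
    have hR2 : (C₁ * Real.exp (β * ξ)) ^ 2
        = 2 * (S ξ₁ * Real.exp (-(2*β) * ξ₁) * Real.exp ((2*β) * ξ)) := by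
      rw [hC₁def]
      have q1 : Real.sqrt (2 * S ξ₁) ^ 2 = 2 * S ξ₁ :=
        Real.sq_sqrt (by linarith [hS0 ξ₁])
      have q2 : Real.exp (-β * ξ₁) * Real.exp (-β * ξ₁) = Real.exp (-(2*β) * ξ₁) := by
        rw [← Real.exp_add]; congr 1; ring
      have q3 : Real.exp (β * ξ) * Real.exp (β * ξ) = Real.exp ((2*β) * ξ) := by
        rw [← Real.exp_add]; congr 1; ring
      calc (Real.sqrt (2 * S ξ₁) * Real.exp (-β * ξ₁) * Real.exp (β * ξ)) ^ 2
          = Real.sqrt (2 * S ξ₁) ^ 2 * ((Real.exp (-β * ξ₁) * Real.exp (-β * ξ₁))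
            * (Real.exp (β * ξ) * Real.exp (β * ξ))) := by ring
        _ = 2 * (S ξ₁ * Real.exp (-(2*β) * ξ₁) * Real.exp ((2*β) * ξ)) := by
            rw [q1, q2, q3]; ring
    calc ‖z ξ‖ = Real.sqrt (‖z ξ‖ ^ 2) := (Real.sqrt_sq (norm_nonneg _)).symm
      _ ≤ Real.sqrt ((C₁ * Real.exp (β * ξ)) ^ 2) := Real.sqrt_le_sqrt (by linarith)
      _ = C₁ * Real.exp (β * ξ) := Real.sqrt_sq hR0
  -- compact part
  obtain ⟨C₂, hC₂⟩ : ∃ C₂ : ℝ, ∀ s ∈ Set.Icc ξ₁ (0:ℝ), ‖‖z s‖ * Real.exp (-β * s)‖ ≤ C₂ := by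
    apply (isCompact_Icc : IsCompact (Set.Icc ξ₁ (0:ℝ))).exists_bound_of_continuousOn
    have hzc : ContinuousOn z (Set.Icc ξ₁ (0:ℝ)) :=
      fun x hx => ((hz x hx.2).continuousAt).continuousWithinAt
    exact hzc.norm.mul
      ((Real.continuous_exp.comp (continuous_const.mul continuous_id)).continuousOn)
  have hC₂0 : 0 ≤ C₂ := (norm_nonneg _).trans (hC₂ ξ₁ ⟨le_refl _, hξ₁0⟩)
  have hmid : ∀ ξ, ξ₁ ≤ ξ → ξ ≤ 0 → ‖z ξ‖ ≤ C₂ * Real.exp (β * ξ) := by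
    intro ξ h1 h2
    have hb : ‖z ξ‖ * Real.exp (-β * ξ) ≤ C₂ := by
      have h := hC₂ ξ ⟨h1, h2⟩
      rw [Real.norm_eq_abs] at h
      exact le_trans (le_abs_self _) h
    have hmul : Real.exp (-β * ξ) * Real.exp (β * ξ) = 1 := by
      rw [← Real.exp_add]; norm_num
    have h3 := mul_le_mul_of_nonneg_right hb (Real.exp_pos (β * ξ)).le
    have h4 : ‖z ξ‖ * Real.exp (-β * ξ) * Real.exp (β * ξ) = ‖z ξ‖ := by
      rw [mul_assoc, hmul, mul_one]
    linarith
  refine ⟨max C₁ C₂ + 1, by positivity, fun ξ hξ => ?_⟩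
  rcases le_total ξ ξ₁ with hcase | hcase
  · calc ‖z ξ‖ ≤ C₁ * Real.exp (β * ξ) := htail ξ hcase
      _ ≤ (max C₁ C₂ + 1) * Real.exp (β * ξ) :=
        mul_le_mul_of_nonneg_right
          (by linarith [le_max_left C₁ C₂]) (Real.exp_pos _).le
  · calc ‖z ξ‖ ≤ C₂ * Real.exp (β * ξ) := hmid ξ hcase hξ
      _ ≤ (max C₁ C₂ + 1) * Real.exp (β * ξ) :=
        mul_le_mul_of_nonneg_right
          (by linarith [le_max_right C₁ C₂]) (Real.exp_pos _).le
end

section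
/- Let Λ₊ be a complex p×p matrix all of whose eigenvalues have positive real part, let τ₀ ∈ ℝ, let g : [τ₀,∞) → ℂᵖ be continuous and bounded, and let z : [τ₀,∞) → ℂᵖ be a bounded differentiable function satisfying z'(τ) = Λ₊ z(τ) + g(τ) for all τ ≥ τ₀. Then the integral ∫_τ^∞ exp(Λ₊(τ−s)) g(s) ds converges absolutely for every τ ≥ τ₀ and z(τ) = −∫_τ^∞ exp(Λ₊(τ−s)) g(s) ds. -/
open scoped Matrix
open NormedSpace MeasureTheory Set Filter Topology

namespace LyapAux

variable {p : ℕ}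

noncomputable def mulVecL (p : ℕ) :
    Matrix (Fin p) (Fin p) ℂ →L[ℝ] (Fin p → ℂ) →L[ℝ] (Fin p → ℂ) := by
  letI : SeminormedRing (Matrix (Fin p) (Fin p) ℂ) := Matrix.linftyOpSemiNormedRing
  letI : NormedRing (Matrix (Fin p) (Fin p) ℂ) := Matrix.linftyOpNormedRing
  letI : NormedAlgebra ℝ (Matrix (Fin p) (Fin p) ℂ) := Matrix.linftyOpNormedAlgebra
  exact LinearMap.toContinuousLinearMap
    { toFun := fun A => LinearMap.toContinuousLinearMap
        { toFun := fun x => A *ᵥ x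
          map_add' := fun x y => Matrix.mulVec_add A x y
          map_smul' := fun r x => Matrix.mulVec_smul A r x }
      map_add' := fun A B => by
        ext x i
        simp [Matrix.add_mulVec]
      map_smul' := fun r A => by
        ext x i
        simp [Matrix.smul_mulVec] }

@[simp] lemma mulVecL_apply (A : Matrix (Fin p) (Fin p) ℂ) (x : Fin p → ℂ) :
    mulVecL p A x = A *ᵥ x := rfl

lemma hasDerivAt_exp_mulVec (Λ : Matrix (Fin p) (Fin p) ℂ) (τ σ : ℝ)
    {z : ℝ → Fin p → ℂ} {zd : Fin p → ℂ} (hz : HasDerivAt z zd σ) :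
    HasDerivAt (fun s : ℝ => exp ((τ - s) • Λ) *ᵥ z s)
      (exp ((τ - σ) • Λ) *ᵥ zd - (exp ((τ - σ) • Λ) * Λ) *ᵥ z σ) σ := by
  letI : SeminormedRing (Matrix (Fin p) (Fin p) ℂ) := Matrix.linftyOpSemiNormedRing
  letI : NormedRing (Matrix (Fin p) (Fin p) ℂ) := Matrix.linftyOpNormedRing
  letI : NormedAlgebra ℝ (Matrix (Fin p) (Fin p) ℂ) := Matrix.linftyOpNormedAlgebra
  letI : NormedAlgebra ℂ (Matrix (Fin p) (Fin p) ℂ) := Matrix.linftyOpNormedAlgebra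
  have hexp : (exp : Matrix (Fin p) (Fin p) ℂ → _) = exp := rfl
  have h1 : HasDerivAt (fun t : ℝ => exp (t • Λ)) (exp ((τ - σ) • Λ) * Λ) (τ - σ) :=
    hasDerivAt_exp_smul_const Λ (τ - σ)
  have h2 : HasDerivAt (fun s : ℝ => τ - s) (-1 : ℝ) σ := by
    simpa using (hasDerivAt_id σ).const_sub τ
  have h3 : HasDerivAt (fun s : ℝ => exp ((τ - s) • Λ))
      (-(exp ((τ - σ) • Λ) * Λ)) σ := by
    have := h1.scomp σ h2
    simp only [neg_smul, one_smul] at this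
    exact this
  have h4 := ((mulVecL p).hasFDerivAt.comp_hasDerivAt σ h3).clm_apply hz
  refine h4.congr_deriv ?_
  change (-(exp ((τ - σ) • Λ) * Λ)) *ᵥ z σ + exp ((τ - σ) • Λ) *ᵥ zd = _
  rw [Matrix.neg_mulVec]
  abel

lemma real_smul_matrix (r : ℝ) (A : Matrix (Fin p) (Fin p) ℂ) :
    r • A = (r : ℂ) • A := by
  rw [← smul_one_smul ℂ r A, Complex.real_smul, mul_one]

lemma exp_mulVec_genEig (Λ : Matrix (Fin p) (Fin p) ℂ) (μ : ℂ) (k : ℕ) (v : Fin p → ℂ)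
    (hv : ((Λ - μ • 1) ^ k) *ᵥ v = 0) (u : ℝ) :
    exp ((-u : ℝ) • Λ) *ᵥ v =
      ∑ j ∈ Finset.range k,
        (Complex.exp ((-u : ℂ) * μ) * ((-u : ℂ) ^ j * ((Nat.factorial j : ℂ))⁻¹)) •
          (((Λ - μ • 1) ^ j) *ᵥ v) := by
  letI : SeminormedRing (Matrix (Fin p) (Fin p) ℂ) := Matrix.linftyOpSemiNormedRing
  letI : NormedRing (Matrix (Fin p) (Fin p) ℂ) := Matrix.linftyOpNormedRing
  letI : NormedAlgebra ℂ (Matrix (Fin p) (Fin p) ℂ) := Matrix.linftyOpNormedAlgebra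
  set N : Matrix (Fin p) (Fin p) ℂ := Λ - μ • 1 with hN
  set b : ℂ := (-u : ℂ) with hb
  have hsmul : (-u : ℝ) • Λ = (b * μ) • (1 : Matrix (Fin p) (Fin p) ℂ) + b • N := by
    rw [real_smul_matrix]
    push_cast
    rw [← hb]
    have hΛ : Λ = μ • (1 : Matrix (Fin p) (Fin p) ℂ) + N := by rw [hN]; abel
    rw [hΛ]
    rw [smul_add, smul_smul]
  have hcomm : Commute ((b * μ) • (1 : Matrix (Fin p) (Fin p) ℂ)) (b • N) :=
    ((Commute.one_left (b • N)).smul_left (b * μ))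
  have hscal : exp ((b * μ) • (1 : Matrix (Fin p) (Fin p) ℂ))
      = Complex.exp (b * μ) • (1 : Matrix (Fin p) (Fin p) ℂ) := by
    rw [← Algebra.algebraMap_eq_smul_one, ← Algebra.algebraMap_eq_smul_one, Complex.exp_eq_exp_ℂ]
    exact (algebraMap_exp_comm (b * μ)).symm
  have hexpand : exp (b • N) *ᵥ v
      = ∑ j ∈ Finset.range k, (b ^ j * ((Nat.factorial j : ℂ))⁻¹) • (N ^ j *ᵥ v) := by
    have hsum : Summable fun n : ℕ => ((Nat.factorial n : ℂ))⁻¹ • (b • N) ^ n :=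
      expSeries_summable' (𝕂 := ℂ) (b • N)
    have hmap := ((mulVecL p).flip v).map_tsum hsum
    have h0 : exp (b • N) *ᵥ v
        = ∑' n : ℕ, (((Nat.factorial n : ℂ))⁻¹ • (b • N) ^ n) *ᵥ v := by
      rw [exp_eq_tsum ℂ]
      exact hmap
    rw [h0]
    have hterm : ∀ n : ℕ, (((Nat.factorial n : ℂ))⁻¹ • (b • N) ^ n) *ᵥ v
        = (b ^ n * ((Nat.factorial n : ℂ))⁻¹) • (N ^ n *ᵥ v) := by
      intro n
      rw [smul_pow, Matrix.smul_mulVec, Matrix.smul_mulVec, smul_smul, mul_comm]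
    simp_rw [hterm]
    refine tsum_eq_sum ?_
    intro n hn
    have hnk : k ≤ n := Nat.le_of_not_lt (by simpa using hn)
    have hzero : N ^ n *ᵥ v = 0 := by
      have hsplit : N ^ n = N ^ (n - k) * N ^ k := by
        rw [← pow_add, Nat.sub_add_cancel hnk]
      rw [hsplit, ← Matrix.mulVec_mulVec, hv, Matrix.mulVec_zero]
    rw [hzero, smul_zero]
  rw [hsmul, Matrix.exp_add_of_commute _ _ hcomm, hscal, smul_mul_assoc, one_mul,
    Matrix.smul_mulVec, hexpand, Finset.smul_sum]
  refine Finset.sum_congr rfl fun j _ => ?_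
  rw [smul_smul]

lemma dec_genEig (Λ : Matrix (Fin p) (Fin p) ℂ) (μ : ℂ) (hμ : 0 < μ.re) (k : ℕ)
    (v : Fin p → ℂ) (hv : ((Λ - μ • 1) ^ k) *ᵥ v = 0) :
    ∃ C : ℝ, 0 ≤ C ∧ ∀ u : ℝ, 0 ≤ u →
      ‖exp ((-u : ℝ) • Λ) *ᵥ v‖ ≤ C * Real.exp (-(μ.re / 2) * u) := by
  set r : ℝ := μ.re with hr
  refine ⟨∑ j ∈ Finset.range k, (2 / r) ^ j * ‖((Λ - μ • 1) ^ j) *ᵥ v‖, ?_, ?_⟩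
  · refine Finset.sum_nonneg fun j _ => mul_nonneg (pow_nonneg (by positivity) j) (norm_nonneg _)
  intro u hu
  rw [exp_mulVec_genEig Λ μ k v hv u, Finset.sum_mul]
  refine (norm_sum_le _ _).trans (Finset.sum_le_sum fun j _ => ?_)
  rw [norm_smul]
  have habs : ‖Complex.exp ((-u : ℂ) * μ) * ((-u : ℂ) ^ j * ((Nat.factorial j : ℂ))⁻¹)‖
      = Real.exp (-(u * r)) * (u ^ j * ((Nat.factorial j : ℝ))⁻¹) := by
    rw [norm_mul, norm_mul, Complex.norm_exp]
    have h1 : ((-u : ℂ) * μ).re = -(u * r) := by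
      simp [Complex.mul_re, hr]
    rw [h1]
    congr 1
    rw [norm_pow, norm_inv]
    have : ‖(-u : ℂ)‖ = u := by
      rw [← Complex.ofReal_neg, Complex.norm_real, Real.norm_eq_abs, abs_neg, abs_of_nonneg hu]
    rw [this]
    congr 1
    simp
  rw [habs]
  have hfac : u ^ j * ((Nat.factorial j : ℝ))⁻¹ ≤ (2 / r) ^ j * Real.exp (r * u / 2) := by
    have hru : 0 ≤ r * u / 2 := by positivity
    have h2 : (r * u / 2) ^ j / (Nat.factorial j : ℝ) ≤ Real.exp (r * u / 2) :=
      Real.pow_div_factorial_le_exp _ hru j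
    have hkey : u ^ j * ((Nat.factorial j : ℝ))⁻¹
        = (2 / r) ^ j * ((r * u / 2) ^ j / (Nat.factorial j : ℝ)) := by
      have h3 : (2 / r) * (r * u / 2) = u := by field_simp
      rw [div_eq_mul_inv ((r*u/2)^j) ((Nat.factorial j : ℝ)), ← mul_assoc, ← mul_pow, h3]
    rw [hkey]
    exact mul_le_mul_of_nonneg_left h2 (by positivity)
  calc Real.exp (-(u * r)) * (u ^ j * ((Nat.factorial j : ℝ))⁻¹) * ‖((Λ - μ • 1) ^ j) *ᵥ v‖
      ≤ Real.exp (-(u * r)) * ((2 / r) ^ j * Real.exp (r * u / 2)) * ‖((Λ - μ • 1) ^ j) *ᵥ v‖ := by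
        exact mul_le_mul_of_nonneg_right
          (mul_le_mul_of_nonneg_left hfac (Real.exp_nonneg _)) (norm_nonneg _)
    _ = (2 / r) ^ j * ‖((Λ - μ • 1) ^ j) *ᵥ v‖ * (Real.exp (-(u * r)) * Real.exp (r * u / 2)) := by
        ring
    _ = (2 / r) ^ j * ‖((Λ - μ • 1) ^ j) *ᵥ v‖ * Real.exp (-(r / 2) * u) := by
        rw [← Real.exp_add]
        congr 1
        ring

lemma dec_vec (Λ : Matrix (Fin p) (Fin p) ℂ)
    (hΛ : ∀ μ ∈ spectrum ℂ Λ, 0 < μ.re) (x : Fin p → ℂ) :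
    ∃ C a : ℝ, 0 < a ∧ 0 ≤ C ∧ ∀ u : ℝ, 0 ≤ u →
      ‖exp ((-u : ℝ) • Λ) *ᵥ x‖ ≤ C * Real.exp (-a * u) := by
  set f : Module.End ℂ (Fin p → ℂ) := Matrix.toLinAlgEquiv' Λ with hf
  have htop := Module.End.iSup_maxGenEigenspace_eq_top f
  have hx : x ∈ ⨆ μ : ℂ, f.maxGenEigenspace μ := htop ▸ Submodule.mem_top
  induction hx using Submodule.iSup_induction' with
  | mem μ y hy =>
    by_cases hy0 : y = 0
    · exact ⟨0, 1, one_pos, le_refl 0, fun u hu => by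
        simp [hy0, Matrix.mulVec_zero]⟩
    obtain ⟨k, hk⟩ := (Module.End.mem_maxGenEigenspace f μ y).mp hy
    have hμspec : μ ∈ spectrum ℂ Λ := by
      have hgen : f.HasGenEigenvalue μ k := by
        rw [Module.End.hasGenEigenvalue_iff]
        refine Submodule.ne_bot_iff _ |>.mpr ⟨y, ?_, hy0⟩
        rw [Module.End.mem_genEigenspace_nat]
        exact hk
      have hEig : f.HasEigenvalue μ := Module.End.hasEigenvalue_of_hasGenEigenvalue hgen
      have := Module.End.hasEigenvalue_iff_mem_spectrum.mp hEig
      rwa [hf, AlgEquiv.spectrum_eq] at this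
    have hmk : ((Λ - μ • 1) ^ k) *ᵥ y = 0 := by
      have heq : (f - μ • 1) ^ k = Matrix.toLinAlgEquiv' ((Λ - μ • 1) ^ k) := by
        rw [map_pow, map_sub, _root_.map_smul, map_one]
      rw [heq, Matrix.toLinAlgEquiv'_apply] at hk
      exact hk
    obtain ⟨C, hC, hbound⟩ := dec_genEig Λ μ (hΛ μ hμspec) k y hmk
    exact ⟨C, μ.re / 2, by have := hΛ μ hμspec; positivity, hC, hbound⟩
  | zero =>
    exact ⟨0, 1, one_pos, le_refl 0, fun u hu => by simp [Matrix.mulVec_zero]⟩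
  | add y w _ _ IHy IHw =>
    obtain ⟨C₁, a₁, ha₁, hC₁, h₁⟩ := IHy
    obtain ⟨C₂, a₂, ha₂, hC₂, h₂⟩ := IHw
    refine ⟨C₁ + C₂, min a₁ a₂, lt_min ha₁ ha₂, by positivity, fun u hu => ?_⟩
    have e₁ : Real.exp (-a₁ * u) ≤ Real.exp (-(min a₁ a₂) * u) :=
      Real.exp_le_exp.mpr (by nlinarith [min_le_left a₁ a₂])
    have e₂ : Real.exp (-a₂ * u) ≤ Real.exp (-(min a₁ a₂) * u) :=
      Real.exp_le_exp.mpr (by nlinarith [min_le_right a₁ a₂])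
    calc ‖exp ((-u : ℝ) • Λ) *ᵥ (y + w)‖
        = ‖exp ((-u : ℝ) • Λ) *ᵥ y + exp ((-u : ℝ) • Λ) *ᵥ w‖ := by
          rw [Matrix.mulVec_add]
      _ ≤ ‖exp ((-u : ℝ) • Λ) *ᵥ y‖ + ‖exp ((-u : ℝ) • Λ) *ᵥ w‖ := norm_add_le _ _
      _ ≤ C₁ * Real.exp (-a₁ * u) + C₂ * Real.exp (-a₂ * u) := add_le_add (h₁ u hu) (h₂ u hu)
      _ ≤ C₁ * Real.exp (-(min a₁ a₂) * u) + C₂ * Real.exp (-(min a₁ a₂) * u) :=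
          add_le_add (mul_le_mul_of_nonneg_left e₁ hC₁) (mul_le_mul_of_nonneg_left e₂ hC₂)
      _ = (C₁ + C₂) * Real.exp (-(min a₁ a₂) * u) := by ring

lemma master (Λ : Matrix (Fin p) (Fin p) ℂ)
    (hΛ : ∀ μ ∈ spectrum ℂ Λ, 0 < μ.re) :
    ∃ C a : ℝ, 0 < a ∧ 0 ≤ C ∧ ∀ u : ℝ, 0 ≤ u → ∀ x : Fin p → ℂ,
      ‖exp ((-u : ℝ) • Λ) *ᵥ x‖ ≤ C * Real.exp (-a * u) * ‖x‖ := by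
  choose C A hA hC hb using fun i : Fin p => dec_vec Λ hΛ (Pi.single i 1)
  set s : Finset ℝ := insert 1 (Finset.image A Finset.univ) with hs_def
  have hs : s.Nonempty := ⟨1, Finset.mem_insert_self _ _⟩
  set a : ℝ := s.min' hs with ha_def
  have ha : 0 < a := by
    rw [ha_def, Finset.lt_min'_iff]
    intro y hy
    rw [hs_def] at hy
    rcases Finset.mem_insert.mp hy with h | h
    · rw [h]; exact one_pos
    · obtain ⟨i, _, hi⟩ := Finset.mem_image.mp h
      rw [← hi]; exact hA i
  have haA : ∀ i, a ≤ A i := fun i =>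
    Finset.min'_le _ _ (Finset.mem_insert_of_mem (Finset.mem_image_of_mem A (Finset.mem_univ i)))
  refine ⟨∑ i, C i, a, ha, Finset.sum_nonneg fun i _ => hC i, fun u hu x => ?_⟩
  have hxdec : ∑ i : Fin p, x i • (Pi.single i 1 : Fin p → ℂ) = x := by
    have h1 : ∀ i : Fin p, x i • (Pi.single i 1 : Fin p → ℂ) = Pi.single i (x i) := by
      intro i
      ext j
      by_cases h : j = i <;> simp [h, Pi.single_apply]
    simp_rw [h1]
    exact Finset.univ_sum_single x
  have hsplit : exp ((-u : ℝ) • Λ) *ᵥ x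
      = ∑ i : Fin p, x i • (exp ((-u : ℝ) • Λ) *ᵥ (Pi.single i 1 : Fin p → ℂ)) := by
    conv_lhs => rw [← hxdec]
    rw [show exp ((-u : ℝ) • Λ) *ᵥ (∑ i : Fin p, x i • (Pi.single i 1 : Fin p → ℂ))
        = mulVecL p (exp ((-u : ℝ) • Λ)) (∑ i : Fin p, x i • (Pi.single i 1 : Fin p → ℂ)) from rfl,
      map_sum]
    refine Finset.sum_congr rfl fun i _ => ?_
    rw [mulVecL_apply, Matrix.mulVec_smul]
  rw [hsplit]
  calc ‖∑ i : Fin p, x i • (exp ((-u : ℝ) • Λ) *ᵥ (Pi.single i 1 : Fin p → ℂ))‖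
      ≤ ∑ i : Fin p, ‖x i • (exp ((-u : ℝ) • Λ) *ᵥ (Pi.single i 1 : Fin p → ℂ))‖ :=
        norm_sum_le _ _
    _ ≤ ∑ i : Fin p, ‖x‖ * (C i * Real.exp (-a * u)) := by
        refine Finset.sum_le_sum fun i _ => ?_
        rw [norm_smul]
        have h1 : ‖x i‖ ≤ ‖x‖ := norm_le_pi_norm x i
        have h2 : ‖exp ((-u : ℝ) • Λ) *ᵥ (Pi.single i 1 : Fin p → ℂ)‖
            ≤ C i * Real.exp (-a * u) := by
          refine (hb i u hu).trans ?_
          refine mul_le_mul_of_nonneg_left ?_ (hC i)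
          exact Real.exp_le_exp.mpr (by nlinarith [haA i])
        exact mul_le_mul h1 h2 (norm_nonneg _) (norm_nonneg _)
    _ = (∑ i, C i) * Real.exp (-a * u) * ‖x‖ := by
        rw [← Finset.mul_sum, ← Finset.sum_mul]
        ring

end LyapAux

/-- Lyapunov–Perron representation (equations (28), (31)): a bounded solution of
`z' = Λ₊ z + g` on `[τ₀, ∞)`, where all eigenvalues of `Λ₊` have positive real part and
`g` is continuous and bounded, is given by `z(τ) = -∫_τ^∞ exp(Λ₊(τ-s)) g(s) ds`, the
integral converging absolutely. -/
theorem stmt2 (p : ℕ) (Λp : Matrix (Fin p) (Fin p) ℂ)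
    (hΛp : ∀ μ ∈ spectrum ℂ Λp, 0 < μ.re)
    (τ₀ : ℝ) (g : ℝ → Fin p → ℂ)
    (hgc : ContinuousOn g (Set.Ici τ₀)) (hgb : ∃ Cg : ℝ, ∀ τ ≥ τ₀, ‖g τ‖ ≤ Cg)
    (z : ℝ → Fin p → ℂ) (hzb : ∃ Cz : ℝ, ∀ τ ≥ τ₀, ‖z τ‖ ≤ Cz)
    (hz : ∀ τ ≥ τ₀, HasDerivAt z (Λp *ᵥ z τ + g τ) τ) :
    ∀ τ ≥ τ₀,
      MeasureTheory.IntegrableOn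
        (fun s : ℝ => (NormedSpace.exp ((τ - s) • Λp)) *ᵥ g s) (Set.Ici τ) ∧
      z τ = -∫ s in Set.Ici τ, (NormedSpace.exp ((τ - s) • Λp)) *ᵥ g s := by
  obtain ⟨Cg, hCg⟩ := hgb
  obtain ⟨Cz, hCz⟩ := hzb
  have hCg0 : 0 ≤ Cg := le_trans (norm_nonneg _) (hCg τ₀ le_rfl)
  obtain ⟨C, a, ha, hC, hmaster⟩ := LyapAux.master Λp hΛp
  intro τ hτ
  -- uniform decay bound for the propagator applied to any vector
  have hEbound : ∀ s, τ ≤ s → ∀ x : Fin p → ℂ,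
      ‖NormedSpace.exp ((τ - s) • Λp) *ᵥ x‖ ≤ C * Real.exp (-a * (s - τ)) * ‖x‖ := by
    intro s hs x
    have h1 : (τ - s) • Λp = (-(s - τ) : ℝ) • Λp := by rw [neg_sub]
    rw [h1]
    exact hmaster (s - τ) (by linarith) x
  -- continuity of the integrand
  have hEcont : Continuous fun s : ℝ => NormedSpace.exp ((τ - s) • Λp) := by
    letI : SeminormedRing (Matrix (Fin p) (Fin p) ℂ) := Matrix.linftyOpSemiNormedRing
    letI : NormedRing (Matrix (Fin p) (Fin p) ℂ) := Matrix.linftyOpNormedRing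
    letI : NormedAlgebra ℂ (Matrix (Fin p) (Fin p) ℂ) := Matrix.linftyOpNormedAlgebra
    letI : NormedAlgebra ℚ (Matrix (Fin p) (Fin p) ℂ) := Matrix.linftyOpNormedAlgebra
    exact exp_continuous.comp ((continuous_const.sub continuous_id).smul continuous_const)
  have hcont : ∀ {S : Set ℝ}, S ⊆ Set.Ici τ₀ →
      ContinuousOn (fun s : ℝ => NormedSpace.exp ((τ - s) • Λp) *ᵥ g s) S := by
    intro S hS
    have h1 : ContinuousOn (fun s : ℝ => LyapAux.mulVecL p
        (NormedSpace.exp ((τ - s) • Λp))) S :=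
      (((LyapAux.mulVecL p).continuous.comp hEcont)).continuousOn
    exact h1.clm_apply (hgc.mono hS)
  -- integrability of the dominating exponential
  have hdom : MeasureTheory.IntegrableOn
      (fun s : ℝ => (C * Cg) * Real.exp (-a * (s - τ))) (Set.Ici τ) := by
    have h0 : MeasureTheory.IntegrableOn (fun s : ℝ => Real.exp (-a * s)) (Set.Ioi τ) :=
      exp_neg_integrableOn_Ioi τ ha
    have h1 : (fun s : ℝ => Real.exp (-a * (s - τ)))
        = fun s : ℝ => Real.exp (a * τ) * Real.exp (-a * s) := by
      funext s
      rw [← Real.exp_add]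
      congr 1
      ring
    rw [integrableOn_Ici_iff_integrableOn_Ioi]
    refine MeasureTheory.Integrable.const_mul ?_ (C * Cg)
    rw [h1]
    exact h0.const_mul _
  -- the integrand is integrable on [τ, ∞)
  have hint : MeasureTheory.IntegrableOn
      (fun s : ℝ => NormedSpace.exp ((τ - s) • Λp) *ᵥ g s) (Set.Ici τ) := by
    refine MeasureTheory.Integrable.mono' hdom
      ((hcont (Set.Ici_subset_Ici.mpr hτ)).aestronglyMeasurable measurableSet_Ici) ?_
    rw [MeasureTheory.ae_restrict_iff' measurableSet_Ici]
    filter_upwards with s hs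
    have hgs : ‖g s‖ ≤ Cg := hCg s (le_trans hτ hs)
    calc ‖NormedSpace.exp ((τ - s) • Λp) *ᵥ g s‖
        ≤ C * Real.exp (-a * (s - τ)) * ‖g s‖ := hEbound s hs _
      _ ≤ C * Real.exp (-a * (s - τ)) * Cg := by
          refine mul_le_mul_of_nonneg_left hgs ?_
          positivity
      _ = C * Cg * Real.exp (-a * (s - τ)) := by ring
  refine ⟨hint, ?_⟩
  -- fundamental theorem of calculus identity
  have key : ∀ σ, τ ≤ σ →
      (∫ s in τ..σ, NormedSpace.exp ((τ - s) • Λp) *ᵥ g s)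
        = NormedSpace.exp ((τ - σ) • Λp) *ᵥ z σ - z τ := by
    intro σ hσ
    have hderiv : ∀ t ∈ Set.uIcc τ σ,
        HasDerivAt (fun s : ℝ => NormedSpace.exp ((τ - s) • Λp) *ᵥ z s)
          (NormedSpace.exp ((τ - t) • Λp) *ᵥ g t) t := by
      intro t ht
      rw [Set.uIcc_of_le hσ] at ht
      have ht0 : τ₀ ≤ t := le_trans hτ ht.1
      have h := LyapAux.hasDerivAt_exp_mulVec Λp τ t (hz t ht0)
      convert h using 1
      rw [Matrix.mulVec_add, ← Matrix.mulVec_mulVec]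
      abel
    have hii : IntervalIntegrable
        (fun s : ℝ => NormedSpace.exp ((τ - s) • Λp) *ᵥ g s) MeasureTheory.volume τ σ := by
      apply ContinuousOn.intervalIntegrable
      refine hcont ?_
      rw [Set.uIcc_of_le hσ]
      exact fun x hx => le_trans hτ hx.1
    have hftc := intervalIntegral.integral_eq_sub_of_hasDerivAt hderiv hii
    rw [hftc]
    congr 1
    rw [sub_self, zero_smul, NormedSpace.exp_zero, Matrix.one_mulVec]
  -- limits as σ → ∞
  have hlim1 : Tendsto (fun σ : ℝ => NormedSpace.exp ((τ - σ) • Λp) *ᵥ z σ) atTop (𝓝 0) := by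
    apply squeeze_zero_norm' (a := fun σ : ℝ => C * Cz * Real.exp (-a * (σ - τ)))
    · filter_upwards [eventually_ge_atTop τ] with σ hσ
      have hzs : ‖z σ‖ ≤ Cz := hCz σ (le_trans hτ hσ)
      calc ‖NormedSpace.exp ((τ - σ) • Λp) *ᵥ z σ‖
          ≤ C * Real.exp (-a * (σ - τ)) * ‖z σ‖ := hEbound σ hσ _
        _ ≤ C * Real.exp (-a * (σ - τ)) * Cz := by
            refine mul_le_mul_of_nonneg_left hzs ?_
            positivity
        _ = C * Cz * Real.exp (-a * (σ - τ)) := by ring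
    · have h2 : Tendsto (fun σ : ℝ => σ - τ) atTop atTop :=
        tendsto_atTop_add_const_right _ _ tendsto_id
      have h3 : Tendsto (fun σ : ℝ => a * (σ - τ)) atTop atTop := h2.const_mul_atTop ha
      have h4 : Tendsto (fun σ : ℝ => -a * (σ - τ)) atTop atBot := by
        have := tendsto_neg_atTop_atBot.comp h3
        simpa [Function.comp_def, neg_mul] using this
      have h5 : Tendsto (fun σ : ℝ => Real.exp (-a * (σ - τ))) atTop (𝓝 0) :=
        Real.tendsto_exp_atBot.comp h4
      have h6 := h5.const_mul (C * Cz)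
      simpa using h6
  have hlim2 : Tendsto (fun σ : ℝ => ∫ s in τ..σ, NormedSpace.exp ((τ - s) • Λp) *ᵥ g s)
      atTop (𝓝 (∫ s in Set.Ioi τ, NormedSpace.exp ((τ - s) • Λp) *ᵥ g s)) :=
    MeasureTheory.intervalIntegral_tendsto_integral_Ioi τ
      (hint.mono_set Set.Ioi_subset_Ici_self) tendsto_id
  have heq : (fun σ : ℝ => NormedSpace.exp ((τ - σ) • Λp) *ᵥ z σ
        - ∫ s in τ..σ, NormedSpace.exp ((τ - s) • Λp) *ᵥ g s) =ᶠ[atTop] fun _ => z τ := by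
    filter_upwards [eventually_ge_atTop τ] with σ hσ
    rw [key σ hσ]
    abel
  have hfull : Tendsto (fun _ : ℝ => z τ) atTop
      (𝓝 (0 - ∫ s in Set.Ioi τ, NormedSpace.exp ((τ - s) • Λp) *ᵥ g s)) := by
    refine (Filter.tendsto_congr' heq).mp ?_
    exact hlim1.sub hlim2
  have hzτ := tendsto_nhds_unique hfull tendsto_const_nhds
  rw [MeasureTheory.integral_Ici_eq_integral_Ioi]
  rw [← hzτ]
  rw [zero_sub]
end

section
/- Let F : (−∞,0] → ℂ^{n×n} be continuous with ‖F(ξ) − W‖ ≤ κ₁ e^{βξ} for all ξ ≤ 0, and let p : (−∞,0] → ℂⁿ be continuous with ‖p(ξ)‖ ≤ κ₂ e^{βξ} for all ξ ≤ 0, where κ₁, κ₂, β > 0. If z : (−∞,0] → ℂⁿ is differentiable, satisfies z'(ξ) = F(ξ) z(ξ) + p(ξ) for all ξ ≤ 0, and z(ξ) → 0 as ξ → −∞, then there exist κ > 0 and β' > 0 such that ‖z(ξ)‖ ≤ κ e^{β'ξ} for all ξ ≤ 0. -/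
open scoped Matrix Matrix.Norms.L2Operator

open Filter Real Set


lemma entry_le_aux (n : ℕ) (A : Matrix (Fin n) (Fin n) ℂ) (i j : Fin n) : ‖A i j‖ ≤ ‖A‖ := by
  have h2 := A.l2_opNorm_mulVec (EuclideanSpace.single j (1:ℂ))
  rw [EuclideanSpace.norm_single, norm_one, mul_one] at h2
  refine le_trans ?_ h2
  set y := (EuclideanSpace.equiv (Fin n) ℂ).symm (A *ᵥ EuclideanSpace.single j (1:ℂ)) with hy
  have hyi : y i = A i j := by
    show (A *ᵥ (Pi.single j (1:ℂ))) i = A i j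
    rw [Matrix.mulVec_single]
    exact mul_one _
  rw [← hyi, EuclideanSpace.norm_eq]
  have h0 : ∀ k, (0:ℝ) ≤ ‖y k‖ ^ 2 := fun k => sq_nonneg _
  calc ‖y i‖ = Real.sqrt (‖y i‖^2) := by rw [Real.sqrt_sq (norm_nonneg _)]
  _ ≤ _ := Real.sqrt_le_sqrt (Finset.single_le_sum (fun k _ => h0 k) (Finset.mem_univ i))


lemma expfac (w : ℂ) (ξ : ℝ) :
    HasDerivAt (fun s : ℝ => Complex.exp (-(w * s))) (-w * Complex.exp (-(w * ξ))) ξ := by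
  have h1 : HasDerivAt (fun c : ℂ => Complex.exp (-(w * c))) (-w * Complex.exp (-(w * ξ))) (ξ : ℂ) := by
    have := (Complex.hasDerivAt_exp (-(w * (ξ:ℂ)))).comp (ξ:ℂ)
      (((hasDerivAt_id (ξ:ℂ)).const_mul w).neg)
    simpa [mul_comm, Function.comp_def, Pi.neg_apply] using this
  exact h1.comp_ofReal

lemma scalar_est (w : ℂ) (hw : w.re ≠ 0) (g : ℝ → ℂ) (hgc : ContinuousOn g (Set.Iic 0))
    (C β : ℝ) (hC : 0 < C) (hβ : 0 < β) (hg : ∀ ξ ≤ (0:ℝ), ‖g ξ‖ ≤ C * Real.exp (β * ξ))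
    (u : ℝ → ℂ) (hu : ∀ ξ ≤ (0:ℝ), HasDerivAt u (w * u ξ + g ξ) ξ)
    (hul : Tendsto u atBot (nhds 0))
    (β' : ℝ) (hβ' : 0 < β') (h1 : 2 * β' ≤ β) (h2 : 2 * β' ≤ |w.re|) :
    ∃ K > 0, ∀ ξ ≤ (0:ℝ), ‖u ξ‖ ≤ K * Real.exp (β' * ξ) := by
  set r := w.re with hr
  set v : ℝ → ℂ := fun ξ => Complex.exp (-(w * ξ)) * u ξ with hv
  -- derivative of v
  have hvd : ∀ ξ ≤ (0:ℝ), HasDerivAt v (Complex.exp (-(w * ξ)) * g ξ) ξ := by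
    intro ξ hξ
    have := (expfac w ξ).mul (hu ξ hξ)
    refine this.congr_deriv ?_
    ring
  -- norm of v
  have hvn : ∀ ξ : ℝ, ‖v ξ‖ = Real.exp (-(r * ξ)) * ‖u ξ‖ := by
    intro ξ
    rw [hv]
    simp only [norm_mul, Complex.norm_exp]
    congr 2
    simp [hr]
  -- continuity of u
  have huc : ContinuousOn u (Set.Iic 0) := fun ξ hξ => (hu ξ hξ).continuousAt.continuousWithinAt
  -- continuity of integrand
  have hic : ContinuousOn (fun s : ℝ => Complex.exp (-(w * s)) * g s) (Set.Iic 0) := by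
    apply ContinuousOn.mul _ hgc
    exact (Complex.continuous_exp.comp (continuous_const.mul Complex.continuous_ofReal).neg).continuousOn
  -- FTC
  have ftc : ∀ a b : ℝ, a ≤ b → b ≤ 0 →
      v b - v a = ∫ s in a..b, Complex.exp (-(w * s)) * g s := by
    intro a b hab hb0
    have hsub : Set.uIcc a b ⊆ Set.Iic 0 := by
      rw [Set.uIcc_of_le hab]
      exact fun x hx => le_trans hx.2 hb0
    refine (intervalIntegral.integral_eq_sub_of_hasDerivAt (fun s hs => hvd s (hsub hs)) ?_).symm
    exact (hic.mono hsub).intervalIntegrable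
  -- bound on integrand
  have hib : ∀ s ≤ (0:ℝ), ‖Complex.exp (-(w * s)) * g s‖ ≤ C * Real.exp ((β - r) * s) := by
    intro s hs
    rw [norm_mul]
    have h1 : ‖Complex.exp (-(w * s))‖ = Real.exp (-(r * s)) := by
      simp only [Complex.norm_exp]
      congr 1
      simp [hr]
    rw [h1]
    calc Real.exp (-(r * s)) * ‖g s‖ ≤ Real.exp (-(r * s)) * (C * Real.exp (β * s)) := by
          exact mul_le_mul_of_nonneg_left (hg s hs) (Real.exp_nonneg _)
      _ = C * Real.exp ((β - r) * s) := by
          rw [mul_left_comm, ← Real.exp_add]; ring_nf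
  -- exact integral of exponential
  have hexpint : ∀ (c : ℝ), c ≠ 0 → ∀ a b : ℝ,
      ∫ s in a..b, Real.exp (c * s) = (Real.exp (c * b) - Real.exp (c * a)) / c := by
    intro c hc a b
    have hd : ∀ s : ℝ, HasDerivAt (fun s : ℝ => Real.exp (c * s) / c) (Real.exp (c * s)) s := by
      intro s
      have := ((Real.hasDerivAt_exp (c * s)).comp s ((hasDerivAt_id s).const_mul c)).div_const c
      refine this.congr_deriv ?_
      field_simp
    rw [intervalIntegral.integral_eq_sub_of_hasDerivAt (fun s _ => hd s)
      ((Real.continuous_exp.comp (continuous_const.mul continuous_id)).intervalIntegrable a b)]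
    ring
  rcases lt_or_gt_of_ne hw with hrneg | hrpos
  · -- r < 0 : integrate from -∞
    set c : ℝ := β - r with hc
    have hc0 : 0 < c := by simp only [hc]; linarith
    have e3 : Tendsto (fun η => ‖v η‖) atBot (nhds 0) := by
      have e1 : Tendsto (fun η : ℝ => Real.exp (-(r * η))) atBot (nhds 0) := by
        apply Real.tendsto_exp_atBot.comp
        have := tendsto_id.const_mul_atBot (show (0:ℝ) < -r by linarith)
        simpa [neg_mul] using this
      have e2 : Tendsto (fun η => ‖u η‖) atBot (nhds 0) := by simpa using hul.norm
      simp_rw [hvn]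
      simpa using e1.mul e2
    have key : ∀ ξ ≤ (0:ℝ), ‖v ξ‖ ≤ C / c * Real.exp (c * ξ) := by
      intro ξ hξ
      have hev : ∀ᶠ η in atBot, ‖v ξ‖ ≤ ‖v η‖ + C / c * Real.exp (c * ξ) := by
        filter_upwards [eventually_le_atBot ξ] with η hη
        have heq := ftc η ξ hη hξ
        have hξη : v ξ = v η + ∫ s in η..ξ, Complex.exp (-(w * s)) * g s := by
          rw [← heq]; ring
        rw [hξη]
        refine le_trans (norm_add_le _ _) (add_le_add le_rfl ?_)
        calc ‖∫ s in η..ξ, Complex.exp (-(w * s)) * g s‖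
            ≤ ∫ s in η..ξ, ‖Complex.exp (-(w * s)) * g s‖ :=
              intervalIntegral.norm_integral_le_integral_norm hη
          _ ≤ ∫ s in η..ξ, C * Real.exp (c * s) := by
              apply intervalIntegral.integral_mono_on hη
              · have hsub : Set.uIcc η ξ ⊆ Set.Iic 0 := by
                  rw [Set.uIcc_of_le hη]
                  exact fun x hx => le_trans hx.2 hξ
                exact ((hic.mono hsub).norm).intervalIntegrable
              · exact (continuous_const.mul
                  (Real.continuous_exp.comp (continuous_const.mul continuous_id))).intervalIntegrable η ξ
              · intro x hx
                exact hib x (le_trans hx.2 hξ)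
          _ = C / c * (Real.exp (c * ξ) - Real.exp (c * η)) := by
              rw [intervalIntegral.integral_const_mul, hexpint c (ne_of_gt hc0)]
              ring
          _ ≤ C / c * Real.exp (c * ξ) :=
              mul_le_mul_of_nonneg_left (sub_le_self _ (Real.exp_nonneg _)) (by positivity)
      have := ge_of_tendsto (e3.add_const (C / c * Real.exp (c * ξ))) hev
      simpa using this
    refine ⟨C / c, by positivity, fun ξ hξ => ?_⟩
    have hufromv : ‖u ξ‖ = Real.exp (r * ξ) * ‖v ξ‖ := by
      rw [hvn ξ, ← mul_assoc, ← Real.exp_add]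
      simp
    rw [hufromv]
    calc Real.exp (r * ξ) * ‖v ξ‖ ≤ Real.exp (r * ξ) * (C / c * Real.exp (c * ξ)) :=
          mul_le_mul_of_nonneg_left (key ξ hξ) (Real.exp_nonneg _)
      _ = C / c * Real.exp (β * ξ) := by
          rw [mul_left_comm, ← Real.exp_add, hc]; ring_nf
      _ ≤ C / c * Real.exp (β' * ξ) := by
          apply mul_le_mul_of_nonneg_left _ (by positivity)
          apply Real.exp_le_exp.mpr
          nlinarith
  · -- r > 0 : integrate to 0
    have hr2 : 2 * β' ≤ r := by rwa [abs_of_pos hrpos] at h2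
    have hkey : ∀ ξ ≤ (0:ℝ), ‖v ξ‖ ≤ ‖v 0‖ + C * (1 + Real.exp ((β - r) * ξ)) * (-ξ) := by
      intro ξ hξ
      have heq := ftc ξ 0 hξ le_rfl
      have hvξ : v ξ = v 0 - ∫ s in ξ..(0:ℝ), Complex.exp (-(w * s)) * g s := by
        rw [← heq]; ring
      rw [hvξ]
      refine le_trans (norm_sub_le _ _) (add_le_add le_rfl ?_)
      have hbnd : ∀ s ∈ Set.uIoc ξ (0:ℝ), ‖Complex.exp (-(w * s)) * g s‖ ≤
          C * (1 + Real.exp ((β - r) * ξ)) := by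
        intro s hs
        rw [Set.uIoc_of_le hξ] at hs
        refine le_trans (hib s hs.2) ?_
        have : Real.exp ((β - r) * s) ≤ 1 + Real.exp ((β - r) * ξ) := by
          rcases le_or_gt 0 (β - r) with hbr | hbr
          · have : Real.exp ((β - r) * s) ≤ 1 := by
              apply Real.exp_le_one_iff.mpr
              exact mul_nonpos_of_nonneg_of_nonpos hbr hs.2
            linarith [Real.exp_nonneg ((β - r) * ξ)]
          · have : Real.exp ((β - r) * s) ≤ Real.exp ((β - r) * ξ) := by
              apply Real.exp_le_exp.mpr
              nlinarith [hs.1]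
            linarith
        exact mul_le_mul_of_nonneg_left this (le_of_lt hC)
      have := intervalIntegral.norm_integral_le_of_norm_le_const hbnd
      have habs : |0 - ξ| = -ξ := by
        rw [zero_sub, abs_neg, abs_of_nonpos hξ]
      rwa [habs] at this
    refine ⟨‖v 0‖ + 2 * C / β' + 1, by positivity, fun ξ hξ => ?_⟩
    have hufromv : ‖u ξ‖ = Real.exp (r * ξ) * ‖v ξ‖ := by
      rw [hvn ξ, ← mul_assoc, ← Real.exp_add]
      simp
    have hminusxi : -ξ ≤ (1 / β') * Real.exp (-(β' * ξ)) := by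
      have h1 : -(β' * ξ) ≤ Real.exp (-(β' * ξ)) := by
        have := Real.add_one_le_exp (-(β' * ξ))
        linarith
      calc -ξ = (-(β' * ξ)) / β' := by field_simp
        _ ≤ Real.exp (-(β' * ξ)) / β' := by gcongr
        _ = (1 / β') * Real.exp (-(β' * ξ)) := by ring
    have t1 : ‖v 0‖ * Real.exp (r * ξ) ≤ ‖v 0‖ * Real.exp (β' * ξ) := by
      apply mul_le_mul_of_nonneg_left _ (norm_nonneg _)
      apply Real.exp_le_exp.mpr
      nlinarith
    have tgen : ∀ q : ℝ, 2 * β' ≤ q → (-ξ) * Real.exp (q * ξ) ≤ (1 / β') * Real.exp (β' * ξ) := by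
      intro q hq
      calc (-ξ) * Real.exp (q * ξ) ≤ ((1 / β') * Real.exp (-(β' * ξ))) * Real.exp (q * ξ) :=
            mul_le_mul_of_nonneg_right hminusxi (Real.exp_nonneg _)
        _ = (1 / β') * Real.exp ((q - β') * ξ) := by
            rw [mul_assoc, ← Real.exp_add]; ring_nf
        _ ≤ (1 / β') * Real.exp (β' * ξ) := by
            apply mul_le_mul_of_nonneg_left _ (by positivity)
            apply Real.exp_le_exp.mpr
            nlinarith
    have t2 := tgen r hr2
    have t3 := tgen β h1
    have hXβ : Real.exp ((β - r) * ξ) * Real.exp (r * ξ) = Real.exp (β * ξ) := by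
      rw [← Real.exp_add]; ring_nf
    calc ‖u ξ‖ = Real.exp (r * ξ) * ‖v ξ‖ := hufromv
      _ ≤ Real.exp (r * ξ) * (‖v 0‖ + C * (1 + Real.exp ((β - r) * ξ)) * (-ξ)) :=
          mul_le_mul_of_nonneg_left (hkey ξ hξ) (Real.exp_nonneg _)
      _ = ‖v 0‖ * Real.exp (r * ξ) + C * ((-ξ) * Real.exp (r * ξ))
          + C * ((-ξ) * (Real.exp ((β - r) * ξ) * Real.exp (r * ξ))) := by ring
      _ = ‖v 0‖ * Real.exp (r * ξ) + C * ((-ξ) * Real.exp (r * ξ))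
          + C * ((-ξ) * Real.exp (β * ξ)) := by rw [hXβ]
      _ ≤ ‖v 0‖ * Real.exp (β' * ξ) + C * ((1 / β') * Real.exp (β' * ξ))
          + C * ((1 / β') * Real.exp (β' * ξ)) := by
          refine add_le_add (add_le_add t1 ?_) ?_
          · exact mul_le_mul_of_nonneg_left t2 (le_of_lt hC)
          · exact mul_le_mul_of_nonneg_left t3 (le_of_lt hC)
      _ = (‖v 0‖ + 2 * C / β') * Real.exp (β' * ξ) := by ring
      _ ≤ (‖v 0‖ + 2 * C / β' + 1) * Real.exp (β' * ξ) := by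
          apply mul_le_mul_of_nonneg_right _ (Real.exp_nonneg _)
          linarith

/-- Exponential estimate for the higher-order boundary-layer terms at `t = T`: a solution
of the linear system `z' = F(ξ) z + p(ξ)` on `(-∞, 0]`, where `F(ξ)` converges
exponentially, as `ξ → -∞`, to the hyperbolic diagonal matrix `W = diag(w₁, …, wₙ)` and
`p` decays exponentially, which tends to `0` at `-∞`, decays exponentially. -/
theorem stmt12 (n : ℕ) (w : Fin n → ℂ) (hw : ∀ i, (w i).re ≠ 0)
    (F : ℝ → Matrix (Fin n) (Fin n) ℂ)
    (hFc : ContinuousOn F (Set.Iic 0))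
    (κ₁ κ₂ β : ℝ) (hκ₁ : 0 < κ₁) (hκ₂ : 0 < κ₂) (hβ : 0 < β)
    (hF : ∀ ξ : ℝ, ξ ≤ 0 → ‖F ξ - Matrix.diagonal w‖ ≤ κ₁ * Real.exp (β * ξ))
    (p : ℝ → Fin n → ℂ)
    (hpc : ContinuousOn p (Set.Iic 0))
    (hp : ∀ ξ : ℝ, ξ ≤ 0 → ‖p ξ‖ ≤ κ₂ * Real.exp (β * ξ))
    (z : ℝ → Fin n → ℂ)
    (hz : ∀ ξ : ℝ, ξ ≤ 0 → HasDerivAt z (F ξ *ᵥ z ξ + p ξ) ξ)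
    (hzlim : Filter.Tendsto z Filter.atBot (nhds 0)) :
    ∃ κ > 0, ∃ β' > 0, ∀ ξ : ℝ, ξ ≤ 0 → ‖z ξ‖ ≤ κ * Real.exp (β' * ξ) := by
  rcases Nat.eq_zero_or_pos n with hn | hn
  · subst hn
    refine ⟨1, one_pos, 1, one_pos, fun ξ _ => ?_⟩
    have h0 : z ξ = 0 := Subsingleton.elim _ _
    rw [h0, norm_zero]
    positivity
  haveI : Nonempty (Fin n) := ⟨⟨0, hn⟩⟩
  -- continuity of z
  have hzc : ContinuousOn z (Set.Iic 0) := fun ξ hξ => (hz ξ hξ).continuousAt.continuousWithinAt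
  -- global bound on z
  obtain ⟨R, hR⟩ : ∃ R : ℝ, ∀ ξ ≤ R, ‖z ξ‖ ≤ 1 := by
    have h1 : ∀ᶠ ξ in atBot, ‖z ξ‖ ≤ 1 := by
      have := (tendsto_zero_iff_norm_tendsto_zero.mp hzlim)
      exact this.eventually_le_const one_pos
    exact eventually_atBot.mp h1
  set R' := min R 0 with hR'
  obtain ⟨C₀, hC₀⟩ := (isCompact_Icc (a := R') (b := 0)).exists_bound_of_continuousOn
    (hzc.mono (fun x hx => hx.2))
  set M := max C₀ 1 with hMdef
  have hM1 : (1:ℝ) ≤ M := le_max_right _ _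
  have hM : ∀ ξ ≤ (0:ℝ), ‖z ξ‖ ≤ M := by
    intro ξ hξ
    rcases le_total ξ R' with h | h
    · exact le_trans (hR ξ (le_trans h (min_le_left _ _))) hM1
    · exact le_trans (hC₀ ξ ⟨h, hξ⟩) (le_max_left _ _)
  have hMpos : (0:ℝ) < M := lt_of_lt_of_le one_pos hM1
  -- constants
  set m := Finset.univ.inf' Finset.univ_nonempty (fun i : Fin n => |(w i).re|) with hmdef
  have hm : 0 < m := by
    rw [hmdef, Finset.lt_inf'_iff]
    exact fun i _ => abs_pos.mpr (hw i)
  set β' := min β m / 2 with hβ'def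
  have hβ'pos : 0 < β' := by
    rw [hβ'def]
    have := lt_min hβ hm
    linarith
  have hββ' : 2 * β' ≤ β := by
    rw [hβ'def]
    have := min_le_left β m
    linarith
  have hmi : ∀ i, 2 * β' ≤ |(w i).re| := by
    intro i
    have h1 : m ≤ |(w i).re| := Finset.inf'_le _ (Finset.mem_univ i)
    have h2 := min_le_right β m
    rw [hβ'def]
    linarith
  set C : ℝ := n * (κ₁ * M) + κ₂ with hCdef
  have hCpos : 0 < C := by positivity
  -- coordinate functions
  set g : Fin n → ℝ → ℂ := fun i ξ => ((F ξ - Matrix.diagonal w) *ᵥ z ξ) i + p ξ i with hgdef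
  -- derivative of coordinates
  have hgder : ∀ i, ∀ ξ ≤ (0:ℝ), HasDerivAt (fun t => z t i) (w i * z ξ i + g i ξ) ξ := by
    intro i ξ hξ
    have hd := hasDerivAt_pi.mp (hz ξ hξ) i
    refine hd.congr_deriv ?_
    simp only [hgdef, Pi.add_apply, Matrix.sub_mulVec, Pi.sub_apply, Matrix.mulVec_diagonal]
    ring
  -- bound on g
  have hgb : ∀ i, ∀ ξ ≤ (0:ℝ), ‖g i ξ‖ ≤ C * Real.exp (β * ξ) := by
    intro i ξ hξ
    have hsum : ((F ξ - Matrix.diagonal w) *ᵥ z ξ) i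
        = ∑ j, (F ξ - Matrix.diagonal w) i j * z ξ j := by
      simp [Matrix.mulVec, dotProduct]
    have hterm : ∀ j, ‖(F ξ - Matrix.diagonal w) i j * z ξ j‖ ≤ (κ₁ * Real.exp (β * ξ)) * M := by
      intro j
      rw [norm_mul]
      apply mul_le_mul _ _ (norm_nonneg _) (by positivity)
      · exact le_trans (entry_le_aux n _ i j) (hF ξ hξ)
      · exact le_trans (norm_le_pi_norm (z ξ) j) (hM ξ hξ)
    calc ‖g i ξ‖ ≤ ‖((F ξ - Matrix.diagonal w) *ᵥ z ξ) i‖ + ‖p ξ i‖ := norm_add_le _ _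
      _ ≤ (n * ((κ₁ * Real.exp (β * ξ)) * M)) + κ₂ * Real.exp (β * ξ) := by
          apply add_le_add
          · rw [hsum]
            refine le_trans (norm_sum_le _ _) ?_
            refine le_trans (Finset.sum_le_sum (fun j _ => hterm j)) ?_
            rw [Finset.sum_const, Finset.card_univ, Fintype.card_fin, nsmul_eq_mul]
          · exact le_trans (norm_le_pi_norm (p ξ) i) (hp ξ hξ)
      _ = C * Real.exp (β * ξ) := by rw [hCdef]; ring
  -- continuity of g i
  have hent : ∀ i j : Fin n, ContinuousOn (fun ξ => F ξ i j) (Set.Iic 0) := by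
    intro i j
    have hlip : LipschitzWith 1 (fun A : Matrix (Fin n) (Fin n) ℂ => A i j) := by
      apply LipschitzWith.of_dist_le_mul
      intro A B
      simp only [NNReal.coe_one, one_mul, dist_eq_norm]
      have h1 : A i j - B i j = (A - B) i j := by simp [Matrix.sub_apply]
      rw [h1]
      exact entry_le_aux n _ i j
    exact hlip.continuous.comp_continuousOn hFc
  have hgcont : ∀ i, ContinuousOn (g i) (Set.Iic 0) := by
    intro i
    apply ContinuousOn.add
    · have heq : (fun ξ => ((F ξ - Matrix.diagonal w) *ᵥ z ξ) i)
          = fun ξ => ∑ j, (F ξ - Matrix.diagonal w) i j * z ξ j := by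
        funext ξ
        simp [Matrix.mulVec, dotProduct]
      rw [heq]
      apply continuousOn_finset_sum
      intro j _
      apply ContinuousOn.mul
      · have h2 : (fun ξ => (F ξ - Matrix.diagonal w) i j)
            = fun ξ => F ξ i j - Matrix.diagonal w i j := by
          funext ξ; simp [Matrix.sub_apply]
        rw [h2]
        exact (hent i j).sub continuousOn_const
      · exact (continuous_apply j).comp_continuousOn hzc
    · exact (continuous_apply i).comp_continuousOn hpc
  -- limits of coordinates
  have hgl : ∀ i, Tendsto (fun ξ => z ξ i) atBot (nhds 0) := by
    intro i
    have := ((continuous_apply i).tendsto (0 : Fin n → ℂ)).comp hzlim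
    exact this
  -- apply the scalar estimate
  choose K hK0 hK using fun i => scalar_est (w i) (hw i) (g i) (hgcont i) C β hCpos hβ
    (hgb i) (fun ξ => z ξ i) (hgder i) (hgl i) β' hβ'pos hββ' (hmi i)
  have hsum0 : 0 ≤ ∑ i, K i := Finset.sum_nonneg fun i _ => (hK0 i).le
  refine ⟨1 + ∑ i, K i, by linarith, β', hβ'pos, fun ξ hξ => ?_⟩
  rw [pi_norm_le_iff_of_nonneg (by have := Real.exp_nonneg (β' * ξ); nlinarith)]
  intro i
  refine le_trans (hK i ξ hξ) ?_
  apply mul_le_mul_of_nonneg_right _ (Real.exp_nonneg _)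
  have h1 : K i ≤ ∑ j, K j := Finset.single_le_sum (fun j _ => (hK0 j).le) (Finset.mem_univ i)
  linarith
end
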